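/- Let X be a topological space, (Y,𝓤) a quasi-uniform space whose topology is compatible with 𝓤, F : X → 2^Y a multifunction and x₀ ∈ X. If F(x₀) is totally bounded, then F is V-lsc at x₀ if and only if F is H-lsc at x₀. -/

import Mathlib

/-!
Given `W ∈ 𝓤`, choose `V ∈ 𝓤` with `V ∘ V ⊆ W` and a finite `V`-net `B ⊆ F x₀`. Each `V(b)`
is a neighbourhood of `b ∈ F x₀`, so V-lower semicontinuity makes `F x` meet all the finitely
many `V(b)` for `x` near `x₀`; then `F x₀ ⊆ V⁻¹(B) ⊆ V⁻¹(V⁻¹(F x)) ⊆ W⁻¹(F x)`. Conversely, an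
open `G` meeting `F x₀` at `y` contains some `W(y)`, and `y ∈ W⁻¹(F x)` makes `F x` meet `W(y)`.
-/

open Filter Topology Set

def relPreimage {Y : Type*} (W : Set (Y × Y)) (A : Set Y) : Set Y :=
  {y | ∃ z ∈ A, (y, z) ∈ W}

lemma relPreimage_eq_preimage {Y : Type*} (W : Set (Y × Y)) (A : Set Y) :
    relPreimage W A = SetRel.preimage W A :=
  rfl

lemma relPreimage_relPreimage_subset {Y : Type*} {V W : Set (Y × Y)}
    (hVW : SetRel.comp V V ⊆ W) (A : Set Y) :
    relPreimage V (relPreimage V A) ⊆ relPreimage W A := by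
  simp only [relPreimage_eq_preimage, ← SetRel.preimage_comp]
  exact SetRel.preimage_subset_preimage_left hVW

def VLowerSemicontinuousAt {X Y : Type*} [TopologicalSpace X] [TopologicalSpace Y]
    (F : X → Set Y) (x₀ : X) : Prop :=
  ∀ G : Set Y, IsOpen G → (F x₀ ∩ G).Nonempty → ∀ᶠ x in 𝓝 x₀, (F x ∩ G).Nonempty

def HLowerSemicontinuousAt {X Y : Type*} [TopologicalSpace X]
    (𝓤 : Filter (Y × Y)) (F : X → Set Y) (x₀ : X) : Prop :=
  ∀ W ∈ 𝓤, ∀ᶠ x in 𝓝 x₀, F x₀ ⊆ relPreimage W (F x)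

section

variable {X Y : Type*} [TopologicalSpace X] [TopologicalSpace Y] {F : X → Set Y} {x₀ : X}
  {𝓤 : Filter (Y × Y)}

theorem VLowerSemicontinuousAt.eventually_mem_relPreimage (hF : VLowerSemicontinuousAt F x₀)
    {V : Set (Y × Y)} {y : Y} (hy : y ∈ F x₀) (hV : {z | (y, z) ∈ V} ∈ 𝓝 y) :
    ∀ᶠ x in 𝓝 x₀, y ∈ relPreimage V (F x) :=
  (hF _ isOpen_interior ⟨y, hy, mem_interior_iff_mem_nhds.2 hV⟩).mono
    fun _ ⟨z, hz, hyz⟩ ↦ ⟨z, hz, interior_subset (s := {z | (y, z) ∈ V}) hyz⟩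

theorem VLowerSemicontinuousAt.hLowerSemicontinuousAt
    (hcomp : ∀ W ∈ 𝓤, ∃ V ∈ 𝓤, SetRel.comp V V ⊆ W)
    (hnhds : ∀ V ∈ 𝓤, ∀ y, {z | (y, z) ∈ V} ∈ 𝓝 y)
    (htb : ∀ W ∈ 𝓤, ∃ B : Set Y, B.Finite ∧ B ⊆ F x₀ ∧ F x₀ ⊆ relPreimage W B)
    (hF : VLowerSemicontinuousAt F x₀) : HLowerSemicontinuousAt 𝓤 F x₀ := by
  intro W hW
  obtain ⟨V, hV, hVW⟩ := hcomp W hW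
  obtain ⟨B, hB, hBF, hFB⟩ := htb V hV
  have hB_near : ∀ᶠ x in 𝓝 x₀, B ⊆ relPreimage V (F x) :=
    eventually_subset_of_finite hB fun b hb ↦
      hF.eventually_mem_relPreimage (hBF hb) (hnhds V hV b)
  filter_upwards [hB_near] with x hx
  calc F x₀ ⊆ relPreimage V B := hFB
    _ ⊆ relPreimage V (relPreimage V (F x)) := SetRel.preimage_subset_preimage hx
    _ ⊆ relPreimage W (F x) := relPreimage_relPreimage_subset hVW _

theorem HLowerSemicontinuousAt.vLowerSemicontinuousAt
    (hbasis : ∀ y : Y, (𝓝 y).HasBasis (· ∈ 𝓤) (fun W => {z | (y, z) ∈ W}))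
    (hF : HLowerSemicontinuousAt 𝓤 F x₀) : VLowerSemicontinuousAt F x₀ := by
  rintro G hG ⟨y, hyF, hyG⟩
  obtain ⟨W, hW, hWG⟩ := (hbasis y).mem_iff.1 (hG.mem_nhds hyG)
  filter_upwards [hF W hW] with x hx
  obtain ⟨z, hz, hyz⟩ := hx hyF
  exact ⟨z, hz, hWG hyz⟩

end

theorem stmt_4_general {X Y : Type*} [TopologicalSpace X] [TopologicalSpace Y]
    (𝓤 : Filter (Y × Y))
    (hcomp : ∀ W ∈ 𝓤, ∃ V ∈ 𝓤, SetRel.comp V V ⊆ W)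
    (hcompat : ∀ y : Y, (𝓝 y).HasBasis (· ∈ 𝓤) (fun W => {z | (y, z) ∈ W}))
    (F : X → Set Y) (x₀ : X)
    (htb : ∀ W ∈ 𝓤, ∃ B : Set Y, B.Finite ∧ B ⊆ F x₀ ∧ F x₀ ⊆ relPreimage W B) :
    (∀ G : Set Y, IsOpen G → (F x₀ ∩ G).Nonempty →
        ∃ U ∈ 𝓝 x₀, ∀ x ∈ U, (F x ∩ G).Nonempty) ↔
      (∀ W ∈ 𝓤, ∃ U ∈ 𝓝 x₀, ∀ x ∈ U, F x₀ ⊆ relPreimage W (F x)) := by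
  have hnhds : ∀ V ∈ 𝓤, ∀ y, {z | (y, z) ∈ V} ∈ 𝓝 y := fun V hV y ↦ (hcompat y).mem_of_mem hV
  simp only [← eventually_iff_exists_mem]
  exact ⟨VLowerSemicontinuousAt.hLowerSemicontinuousAt hcomp hnhds htb,
    HLowerSemicontinuousAt.vLowerSemicontinuousAt hcompat⟩

/-- If `F x₀` is totally bounded, then `F` is V-lsc at `x₀` iff it is H-lsc at `x₀`. -/
theorem stmt_4 {X Y : Type*} [TopologicalSpace X] [TopologicalSpace Y]
    (𝓤 : Filter (Y × Y))
    (hdiag : ∀ W ∈ 𝓤, ∀ y : Y, (y, y) ∈ W)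
    (hcomp : ∀ W ∈ 𝓤, ∃ V ∈ 𝓤, SetRel.comp V V ⊆ W)
    (hcompat : ∀ y : Y, (𝓝 y).HasBasis (· ∈ 𝓤) (fun W => {z | (y, z) ∈ W}))
    (F : X → Set Y) (x₀ : X)
    (htb : ∀ W ∈ 𝓤, ∃ B : Set Y, B.Finite ∧ B ⊆ F x₀ ∧ F x₀ ⊆ relPreimage W B) :
    (∀ G : Set Y, IsOpen G → (F x₀ ∩ G).Nonempty →
        ∃ U ∈ 𝓝 x₀, ∀ x ∈ U, (F x ∩ G).Nonempty) ↔
      (∀ W ∈ 𝓤, ∃ U ∈ 𝓝 x₀, ∀ x ∈ U, F x₀ ⊆ relPreimage W (F x)) :=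
  stmt_4_general 𝓤 hcomp hcompat F x₀ htb
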